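/- arXiv:1603.07705 — 2 statements merged into one kernel-verified Lean document; each statement's English description precedes it below -/
import Mathlib

section
/- Let K ⊂ ℝ be compact with nested compacts F_{s+1} ⊆ F_s, K = ⋂_s F_s, Cap(F_s) → Cap(K) > 0, μ_{F_s} → μ_K weak-star, and suppose W_n(μ_{F_s}) ≥ 1 for all n and s. Then W_n(μ_K) ≥ 1 for all n ∈ ℕ, where W_n(ν) := ‖P_n(·;ν)‖_{L²(ν)}/Cap(supp)^n with the appropriate capacity in the denominator. -/
open MeasureTheory Filter Polynomial

/-!
By minimality of `PF s n` and the Widom bound on `F s`,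
`∫ (P n)² dμF s ≥ ∫ (PF s n)² dμF s ≥ capF s ^ (2n) ≥ capK ^ (2n)` for every `s`.
As `(P n)²` is continuous, weak-star convergence `μF s → μK` carries this lower bound to `μK`.
-/

theorem Real.one_le_sqrt_div_iff {x a : ℝ} (ha : 0 < a) : 1 ≤ √x / a ↔ a ^ 2 ≤ x := by
  rw [one_le_div ha, Real.le_sqrt' ha]

theorem widom_ge_one_of_approximation_general
    (capK : ℝ) (capF : ℕ → ℝ) (hcapKpos : 0 < capK)
    (hmono : ∀ s, capK ≤ capF s)
    (μK : Measure ℝ)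
    (μF : ℕ → Measure ℝ)
    (hweak : ∀ f : ℝ → ℝ, Continuous f →
      Tendsto (fun s => ∫ t, f t ∂(μF s)) atTop (nhds (∫ t, f t ∂μK)))
    (P : ℕ → Polynomial ℝ) (PF : ℕ → ℕ → Polynomial ℝ)
    (hPmonic : ∀ n, (P n).Monic) (hPdeg : ∀ n, (P n).natDegree = n)
    (hPFmin : ∀ s n, ∀ Q : Polynomial ℝ, Q.Monic → Q.natDegree = n →
      ∫ t, (PF s n).eval t ^ 2 ∂(μF s) ≤ ∫ t, Q.eval t ^ 2 ∂(μF s))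
    (hW : ∀ s n, 1 ≤ Real.sqrt (∫ t, (PF s n).eval t ^ 2 ∂(μF s)) / capF s ^ n) :
    ∀ n : ℕ, 1 ≤ Real.sqrt (∫ t, (P n).eval t ^ 2 ∂μK) / capK ^ n := by
  intro n
  rw [Real.one_le_sqrt_div_iff (pow_pos hcapKpos n)]
  refine ge_of_tendsto (hweak _ ((P n).continuous.pow 2)) (Eventually.of_forall fun s => ?_)
  have hcapF : 0 < capF s := hcapKpos.trans_le (hmono s)
  calc (capK ^ n) ^ 2 ≤ (capF s ^ n) ^ 2 := by gcongr; exact hmono s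
    _ ≤ ∫ t, (PF s n).eval t ^ 2 ∂(μF s) :=
      (Real.one_le_sqrt_div_iff (pow_pos hcapF n)).1 (hW s n)
    _ ≤ ∫ t, (P n).eval t ^ 2 ∂(μF s) := hPFmin s n (P n) (hPmonic n) (hPdeg n)

/-- Let `K ⊆ ℝ` be compact, approximated by nested compacts
`F (s+1) ⊆ F s` with `K = ⋂ s, F s`, capacities `capF s → capK > 0` (with
`capK ≤ capF s`), equilibrium measures `μF s → μK` weak-star, and suppose the
Widom factors of the `μF s` satisfy `W n (μF s) ≥ 1` for all `n, s`.  Then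
`W n (μK) = ‖P n (·;μK)‖_{L²(μK)} / capK ^ n ≥ 1` for all `n`. -/
theorem widom_ge_one_of_approximation
    (K : Set ℝ) (hK : IsCompact K) (hKinf : K.Infinite)
    (F : ℕ → Set ℝ) (hF : ∀ s, IsCompact (F s))
    (hnest : ∀ s, F (s + 1) ⊆ F s) (hsub : ∀ s, K ⊆ F s)
    (hinter : K = ⋂ s, F s)
    (capK : ℝ) (capF : ℕ → ℝ) (hcapKpos : 0 < capK)
    (hmono : ∀ s, capK ≤ capF s)
    (hcaplim : Tendsto capF atTop (nhds capK))
    (μK : Measure ℝ) [IsProbabilityMeasure μK] (hsuppK : μK Kᶜ = 0)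
    (μF : ℕ → Measure ℝ) [∀ s, IsProbabilityMeasure (μF s)]
    (hsuppF : ∀ s, μF s (F s)ᶜ = 0)
    (hweak : ∀ f : ℝ → ℝ, Continuous f →
      Tendsto (fun s => ∫ t, f t ∂(μF s)) atTop (nhds (∫ t, f t ∂μK)))
    (P : ℕ → Polynomial ℝ) (PF : ℕ → ℕ → Polynomial ℝ)
    (hPmonic : ∀ n, (P n).Monic) (hPdeg : ∀ n, (P n).natDegree = n)
    (hPmin : ∀ n, ∀ Q : Polynomial ℝ, Q.Monic → Q.natDegree = n →
      ∫ t, (P n).eval t ^ 2 ∂μK ≤ ∫ t, Q.eval t ^ 2 ∂μK)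
    (hPFmonic : ∀ s n, (PF s n).Monic) (hPFdeg : ∀ s n, (PF s n).natDegree = n)
    (hPFmin : ∀ s n, ∀ Q : Polynomial ℝ, Q.Monic → Q.natDegree = n →
      ∫ t, (PF s n).eval t ^ 2 ∂(μF s) ≤ ∫ t, Q.eval t ^ 2 ∂(μF s))
    (hW : ∀ s n, 1 ≤ Real.sqrt (∫ t, (PF s n).eval t ^ 2 ∂(μF s)) / capF s ^ n) :
    ∀ n : ℕ, 1 ≤ Real.sqrt (∫ t, (P n).eval t ^ 2 ∂μK) / capK ^ n :=
  widom_ge_one_of_approximation_general capK capF hcapKpos hmono μK μF hweak P PF hPmonic hPdeg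
    hPFmin hW
end

section
/- Let K = ⋃_{j=1}^p [α_j, β_j] be a disjoint union of p intervals with equilibrium measure density μ_K'(t) = (1/π)|q(t)|/√(∏_{j=1}^p |(t−α_j)(t−β_j)|), where q(t) = ∏_{j=1}^{p−1}(t − c_j) and c_j are the critical points of the Green function g_K. Then ∫ log μ_K'(t) dμ_K(t) = −log π + PW(K) − log Cap(K), where PW(K) = Σ_j g_K(c_j). -/
/-!
Where the density `w` is positive (which is `μ`-almost everywhere),
`log w = -log π + ∑ₖ log |t - c k| - (∑ᵢ (log |t - α i| + log |t - β i|)) / 2`.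
Integrating against `μ` and inserting the two potential identities gives
`-log π + ∑ₖ (g (c k) + log cap) - p log cap`, which is the claim because there are `p - 1`
critical points.

The analytic input is the integrability of `log |t - z|` against `μ`. By disjointness the factors
of the density belonging to the other intervals are bounded away from zero on `[α j, β j]`, so
there `w = O(|t - α j|^(-1/2) + |t - β j|^(-1/2))`; and `|log u| ≤ u^(-ε)/ε + u` together with
`x^a y^b ≤ x^(a+b) + y^(a+b)` (for `a, b < 0`) dominates `log |t - z| * |t - γ|^r` by powers
`|t - ·|^s` with `s > -1`.
-/

open MeasureTheory

lemma abs_log_le_rpow_neg_div_add {u ε : ℝ} (hu : 0 ≤ u) (hε : 0 < ε) :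
    |Real.log u| ≤ u ^ (-ε) / ε + u := by
  rcases hu.eq_or_lt with rfl | hu'
  · simp [Real.zero_rpow (neg_ne_zero.mpr hε.ne')]
  have hpow : 0 ≤ u ^ (-ε) := Real.rpow_nonneg hu _
  rcases le_total u 1 with h1 | h1
  · have h := Real.log_le_self hpow
    rw [Real.log_rpow hu'] at h
    have : -Real.log u ≤ u ^ (-ε) / ε := by rw [le_div_iff₀ hε]; linarith
    rw [abs_of_nonpos (Real.log_nonpos hu h1)]
    linarith
  · rw [abs_of_nonneg (Real.log_nonneg h1)]
    linarith [Real.log_le_self hu, div_nonneg hpow hε.le]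

lemma rpow_mul_rpow_le_of_neg {x y a b : ℝ} (hx : 0 ≤ x) (hy : 0 ≤ y) (ha : a < 0)
    (hb : b < 0) : x ^ a * y ^ b ≤ x ^ (a + b) + y ^ (a + b) := by
  have hxab : 0 ≤ x ^ (a + b) := Real.rpow_nonneg hx _
  have hyab : 0 ≤ y ^ (a + b) := Real.rpow_nonneg hy _
  rcases hx.eq_or_lt with rfl | hx
  · rw [Real.zero_rpow ha.ne, zero_mul]; positivity
  rcases hy.eq_or_lt with rfl | hy
  · rw [Real.zero_rpow hb.ne, mul_zero]; positivity
  rcases le_total x y with hxy | hxy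
  · calc x ^ a * y ^ b ≤ x ^ a * x ^ b :=
          mul_le_mul_of_nonneg_left (Real.rpow_le_rpow_of_nonpos hx hxy hb.le)
            (Real.rpow_nonneg hx.le _)
      _ = x ^ (a + b) := (Real.rpow_add hx a b).symm
      _ ≤ _ := le_add_of_nonneg_right hyab
  · calc x ^ a * y ^ b ≤ y ^ a * y ^ b :=
          mul_le_mul_of_nonneg_right (Real.rpow_le_rpow_of_nonpos hy hxy ha.le)
            (Real.rpow_nonneg hy.le _)
      _ = y ^ (a + b) := (Real.rpow_add hy a b).symm
      _ ≤ _ := le_add_of_nonneg_left hxab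

lemma inv_sqrt_mul_le {x y L : ℝ} (hx : 0 ≤ x) (hy : 0 ≤ y) (hL : 0 < L) (hxy : L ≤ x + y) :
    (√(x * y))⁻¹ ≤ ((√x)⁻¹ + (√y)⁻¹) / √L := by
  rcases hx.eq_or_lt with rfl | hx
  · simp only [zero_mul, Real.sqrt_zero, inv_zero, zero_add]; positivity
  rcases hy.eq_or_lt with rfl | hy
  · simp only [mul_zero, Real.sqrt_zero, inv_zero, add_zero]; positivity
  have hsx := Real.sqrt_pos.mpr hx
  have hsy := Real.sqrt_pos.mpr hy
  have hL' : √L ≤ √x + √y := by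
    rw [Real.sqrt_le_left (by positivity)]
    nlinarith [Real.sq_sqrt hx.le, Real.sq_sqrt hy.le]
  rw [Real.sqrt_mul hx.le, le_div_iff₀ (Real.sqrt_pos.mpr hL)]
  field_simp
  linarith

lemma integrableOn_abs_sub_rpow (c a b : ℝ) {r : ℝ} (hr : -1 < r) :
    IntegrableOn (fun t => |t - c| ^ r) (Set.Icc a b) := by
  have h : IntervalIntegrable (fun x : ℝ => |x| ^ r) volume (a - c) (b - c) := by
    simpa [Complex.norm_cpow_real] using
      (intervalIntegral.intervalIntegrable_cpow' (r := r) (by simpa)).norm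
  have := h.comp_sub_right c
  simp only [sub_add_cancel] at this
  exact ((intervalIntegrable_iff').1 this).mono_set Set.Icc_subset_uIcc

lemma integrableOn_log_abs_sub_mul_abs_sub_rpow (z γ a b : ℝ) {r : ℝ} (hr : -1 < r)
    (hr0 : r < 0) :
    IntegrableOn (fun t => Real.log |t - z| * |t - γ| ^ r) (Set.Icc a b) := by
  set ε := (1 + r) / 2 with hε_def
  have hε : 0 < ε := by linarith
  set U := |a - z| + |b - z|
  have hdom : IntegrableOn
      (fun t => (|t - z| ^ (-ε + r) + |t - γ| ^ (-ε + r)) / ε + U * |t - γ| ^ r)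
      (Set.Icc a b) := by
    have hexp : -1 < -ε + r := by rw [hε_def]; linarith
    exact (((integrableOn_abs_sub_rpow z a b hexp).add
      (integrableOn_abs_sub_rpow γ a b hexp)).div_const ε).add
      ((integrableOn_abs_sub_rpow γ a b hr).const_mul U)
  refine hdom.mono' (by fun_prop) ?_
  filter_upwards [ae_restrict_mem measurableSet_Icc] with t ht
  have hzU : |t - z| ≤ U := by
    have := ht.1; have := ht.2
    rcases le_total t z with h | h
    · rw [abs_of_nonpos (by linarith)]; linarith [neg_le_abs (a - z), abs_nonneg (b - z)]
    · rw [abs_of_nonneg (by linarith)]; linarith [le_abs_self (b - z), abs_nonneg (a - z)]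
  have hγ : 0 ≤ |t - γ| ^ r := Real.rpow_nonneg (abs_nonneg _) r
  calc ‖Real.log |t - z| * |t - γ| ^ r‖ = |Real.log (|t - z|)| * |t - γ| ^ r := by
        rw [Real.norm_eq_abs, abs_mul, abs_of_nonneg hγ]
    _ ≤ (|t - z| ^ (-ε) / ε + U) * |t - γ| ^ r := by
        gcongr
        exact (abs_log_le_rpow_neg_div_add (abs_nonneg _) hε).trans (by gcongr)
    _ = (|t - z| ^ (-ε) * |t - γ| ^ r) / ε + U * |t - γ| ^ r := by ring
    _ ≤ _ := by
        gcongr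
        exact rpow_mul_rpow_le_of_neg (abs_nonneg _) (abs_nonneg _) (by linarith) hr0

lemma exists_div_sqrt_le_on_Icc {a b : ℝ} (hab : a < b) {f h : ℝ → ℝ}
    (hf : ContinuousOn f (Set.Icc a b)) (hh : ContinuousOn h (Set.Icc a b))
    (hpos : ∀ t ∈ Set.Icc a b, 0 < h t) :
    ∃ C, ∀ t ∈ Set.Icc a b,
      f t / √(|(t - a) * (t - b)| * h t) ≤ C * ((√|t - a|)⁻¹ + (√|t - b|)⁻¹) := by
  obtain ⟨M, hM⟩ := isCompact_Icc.exists_bound_of_continuousOn hf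
  obtain ⟨t₀, ht₀, hmin⟩ :=
    isCompact_Icc.exists_isMinOn (Set.nonempty_Icc.mpr hab.le) hh
  have hM0 : 0 ≤ M := (norm_nonneg _).trans (hM a (Set.left_mem_Icc.mpr hab.le))
  have hm : 0 < h t₀ := hpos t₀ ht₀
  refine ⟨M / (√(h t₀) * √(b - a)), fun t ht => ?_⟩
  have hsum : b - a ≤ |t - a| + |t - b| := by
    rw [abs_of_nonneg (by linarith [ht.1]), abs_of_nonpos (by linarith [ht.2])]
    linarith
  calc f t / √(|(t - a) * (t - b)| * h t)
      = f t * (√(|t - a| * |t - b|))⁻¹ * (√(h t))⁻¹ := by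
        rw [abs_mul, Real.sqrt_mul (by positivity), div_eq_mul_inv, mul_inv, mul_assoc]
    _ ≤ M * (((√|t - a|)⁻¹ + (√|t - b|)⁻¹) / √(b - a)) * (√(h t₀))⁻¹ := by
        gcongr
        · exact (le_abs_self _).trans (hM t ht)
        · exact inv_sqrt_mul_le (abs_nonneg _) (abs_nonneg _) (by linarith) hsum
        · exact hmin ht
    _ = M / (√(h t₀) * √(b - a)) * ((√|t - a|)⁻¹ + (√|t - b|)⁻¹) := by
        field_simp

lemma integrable_log_abs_sub_withDensity {ι : Type*} [Finite ι] (a b : ι → ℝ) {φ : ℝ → ℝ}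
    (hφm : Measurable φ) (hφ0 : ∀ t, 0 ≤ φ t)
    (hbound : ∀ j, ∃ C, ∀ t ∈ Set.Icc (a j) (b j),
      φ t ≤ C * ((√|t - a j|)⁻¹ + (√|t - b j|)⁻¹)) (z : ℝ) :
    Integrable (fun t => Real.log |t - z|)
      ((volume.restrict (⋃ j, Set.Icc (a j) (b j))).withDensity
        fun t => ENNReal.ofReal (φ t)) := by
  rw [integrable_withDensity_iff hφm.ennreal_ofReal (ae_of_all _ fun _ => ENNReal.ofReal_lt_top)]
  simp_rw [ENNReal.toReal_ofReal (hφ0 _)]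
  refine integrableOn_finite_iUnion.mpr fun j => ?_
  obtain ⟨C, hC⟩ := hbound j
  have hsing : ∀ γ, IntegrableOn (fun t => Real.log |t - z| * (√|t - γ|)⁻¹)
      (Set.Icc (a j) (b j)) := fun γ => by
    simpa only [Real.sqrt_eq_rpow, Real.rpow_neg (abs_nonneg _)] using
      integrableOn_log_abs_sub_mul_abs_sub_rpow z γ (a j) (b j) (r := -(1 / 2))
        (by norm_num) (by norm_num)
  refine (((hsing (a j)).norm.add (hsing (b j)).norm).const_mul C).mono' (by fun_prop) ?_
  filter_upwards [ae_restrict_mem measurableSet_Icc] with t ht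
  calc ‖Real.log |t - z| * φ t‖ = |Real.log (|t - z|)| * φ t := by
        rw [Real.norm_eq_abs, abs_mul, abs_of_nonneg (hφ0 t)]
    _ ≤ |Real.log (|t - z|)| * (C * ((√|t - a j|)⁻¹ + (√|t - b j|)⁻¹)) := by
        gcongr
        exact hC t ht
    _ = _ := by
        simp only [Pi.add_apply, norm_mul, norm_inv, Real.norm_eq_abs,
          abs_of_nonneg (Real.sqrt_nonneg _)]
        ring

section EquilibriumDensity

variable {ι κ : Type*} [Fintype ι] [Fintype κ] (α β : ι → ℝ) (c : κ → ℝ)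

noncomputable def equilibriumDensity (t : ℝ) : ℝ :=
  1 / Real.pi * (∏ k, |t - c k|) / √(∏ i, |(t - α i) * (t - β i)|)

lemma equilibriumDensity_nonneg (t : ℝ) : 0 ≤ equilibriumDensity α β c t := by
  unfold equilibriumDensity; positivity

lemma measurable_equilibriumDensity : Measurable (equilibriumDensity α β c) := by
  unfold equilibriumDensity; fun_prop

lemma exists_equilibriumDensity_le_on_Icc [DecidableEq ι] (hαβ : ∀ i, α i < β i)
    (hdisj : Pairwise (Function.onFun Disjoint fun i => Set.Icc (α i) (β i))) (j : ι) :
    ∃ C, ∀ t ∈ Set.Icc (α j) (β j),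
      equilibriumDensity α β c t ≤ C * ((√|t - α j|)⁻¹ + (√|t - β j|)⁻¹) := by
  simp_rw [equilibriumDensity, ← Finset.mul_prod_erase _ _ (Finset.mem_univ j)]
  refine exists_div_sqrt_le_on_Icc (hαβ j) (by fun_prop) (by fun_prop) fun t ht => ?_
  have hout : ∀ i ≠ j, ∀ s ∈ Set.Icc (α i) (β i), t ≠ s := fun i hij s hs hts =>
    Set.disjoint_left.mp (hdisj hij) hs (hts ▸ ht)
  refine Finset.prod_pos fun i hi => abs_pos.mpr (mul_ne_zero ?_ ?_) <;> rw [sub_ne_zero] <;>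
    refine hout i (Finset.ne_of_mem_erase hi) _ ?_
  exacts [Set.left_mem_Icc.mpr (hαβ i).le, Set.right_mem_Icc.mpr (hαβ i).le]

variable {α β c} in
lemma log_equilibriumDensity {t : ℝ} (h : 0 < equilibriumDensity α β c t) :
    Real.log (equilibriumDensity α β c t) =
      -Real.log Real.pi + ∑ k, Real.log |t - c k| -
        (∑ i, (Real.log |t - α i| + Real.log |t - β i|)) / 2 := by
  unfold equilibriumDensity at h ⊢
  have hs : 0 < √(∏ i, |(t - α i) * (t - β i)|) := by
    rcases (Real.sqrt_nonneg _).eq_or_lt with h0 | h0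
    · rw [← h0, div_zero] at h; exact absurd h (lt_irrefl 0)
    · exact h0
  have hP := Real.sqrt_pos.mp hs
  have hN : 0 < ∏ k, |t - c k| :=
    (mul_pos_iff_of_pos_left (by positivity)).mp ((div_pos_iff_of_pos_right hs).mp h)
  have hc : ∀ k ∈ Finset.univ, |t - c k| ≠ 0 := Finset.prod_ne_zero_iff.mp hN.ne'
  have hαβ : ∀ i ∈ Finset.univ, |(t - α i) * (t - β i)| ≠ 0 :=
    Finset.prod_ne_zero_iff.mp hP.ne'
  rw [Real.log_div (by positivity) hs.ne', Real.log_mul (by positivity) hN.ne',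
    Real.log_sqrt hP.le, one_div, Real.log_inv, Real.log_prod hc, Real.log_prod hαβ]
  congr 2
  refine Finset.sum_congr rfl fun i hi => ?_
  obtain ⟨hα, hβ⟩ := mul_ne_zero_iff.mp (abs_ne_zero.mp (hαβ i hi))
  rw [abs_mul, Real.log_mul (abs_ne_zero.mpr hα) (abs_ne_zero.mpr hβ)]

lemma integral_log_equilibriumDensity {μ : Measure ℝ} [IsProbabilityMeasure μ]
    (hint : ∀ z, Integrable (fun t => Real.log |t - z|) μ)
    (hpos : ∀ᵐ t ∂μ, 0 < equilibriumDensity α β c t) :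
    ∫ t, Real.log (equilibriumDensity α β c t) ∂μ =
      -Real.log Real.pi + ∑ k, ∫ t, Real.log |t - c k| ∂μ -
        (∑ i, (∫ t, Real.log |t - α i| ∂μ + ∫ t, Real.log |t - β i| ∂μ)) / 2 := by
  have hends : ∀ i, Integrable (fun t => Real.log |t - α i| + Real.log |t - β i|) μ :=
    fun i => (hint _).add (hint _)
  have hsum_c : Integrable (fun t => ∑ k, Real.log |t - c k|) μ :=
    integrable_finsetSum _ fun k _ => hint _
  have hsum_ends : Integrable
      (fun t => (∑ i, (Real.log |t - α i| + Real.log |t - β i|)) / 2) μ :=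
    (integrable_finsetSum _ fun i _ => hends i).div_const 2
  have hconst_c : Integrable (fun t => -Real.log Real.pi + ∑ k, Real.log |t - c k|) μ :=
    (integrable_const _).add hsum_c
  rw [integral_congr_ae (hpos.mono fun t => log_equilibriumDensity),
    integral_sub hconst_c hsum_ends, integral_add (integrable_const _) hsum_c,
    integral_const, probReal_univ, one_smul, integral_finsetSum _ fun k _ => hint _,
    integral_div, integral_finsetSum _ fun i _ => hends i]
  simp_rw [integral_add (hint _) (hint _)]

end EquilibriumDensity

theorem szego_integral_equilibrium_general
    (p : ℕ) (hp : 1 ≤ p) (α β : Fin p → ℝ) (hαβ : ∀ j, α j < β j)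
    (hdisj : Pairwise (Function.onFun Disjoint fun j => Set.Icc (α j) (β j)))
    (cp : Fin (p - 1) → ℝ)
    (g : ℝ → ℝ) (cap : ℝ)
    (μ : Measure ℝ) [IsProbabilityMeasure μ]
    (w : ℝ → ℝ)
    (hw : ∀ t, w t = (1 / Real.pi) * (∏ j, |t - cp j|) /
      Real.sqrt (∏ j, |(t - α j) * (t - β j)|))
    (hdensity : μ = (volume.restrict (⋃ j, Set.Icc (α j) (β j))).withDensity
      fun t => ENNReal.ofReal (w t))
    (hfrost : ∀ z ∈ ⋃ j, Set.Icc (α j) (β j),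
      ∫ t, Real.log |z - t| ∂μ = Real.log cap)
    (hgreen : ∀ j : Fin (p - 1),
      ∫ t, Real.log |t - cp j| ∂μ = g (cp j) + Real.log cap) :
    ∫ t, Real.log (w t) ∂μ =
      -Real.log Real.pi + (∑ j, g (cp j)) - Real.log cap := by
  obtain rfl : w = equilibriumDensity α β cp := funext hw
  have hlog : ∀ z, Integrable (fun t => Real.log |t - z|) μ := hdensity ▸
    integrable_log_abs_sub_withDensity α β (measurable_equilibriumDensity α β cp)
      (equilibriumDensity_nonneg α β cp) (exists_equilibriumDensity_le_on_Icc α β cp hαβ hdisj)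
  have hpos : ∀ᵐ t ∂μ, 0 < equilibriumDensity α β cp t := by
    rw [hdensity, ae_withDensity_iff (measurable_equilibriumDensity α β cp).ennreal_ofReal]
    exact ae_of_all _ fun t ht => ENNReal.ofReal_pos.mp (pos_iff_ne_zero.mpr ht)
  have hα i : ∫ t, Real.log |t - α i| ∂μ = Real.log cap := by
    simpa only [abs_sub_comm] using
      hfrost _ (Set.mem_iUnion.mpr ⟨i, Set.left_mem_Icc.mpr (hαβ i).le⟩)
  have hβ i : ∫ t, Real.log |t - β i| ∂μ = Real.log cap := by
    simpa only [abs_sub_comm] using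
      hfrost _ (Set.mem_iUnion.mpr ⟨i, Set.right_mem_Icc.mpr (hαβ i).le⟩)
  rw [integral_log_equilibriumDensity α β cp hlog hpos]
  simp only [hgreen, hα, hβ, Finset.sum_add_distrib, Finset.sum_const, Finset.card_univ,
    Fintype.card_fin, nsmul_eq_mul, Nat.cast_sub hp, Nat.cast_one]
  ring

/-- Let `K = ⋃_{j=1}^p [α j, β j]` be a disjoint union of `p` compact
intervals with equilibrium measure `μ` of density
`w t = (1/π) |∏_j (t - cp j)| / √(∏_j |(t - α j)(t - β j)|)`, where the `cp j` are the
critical points of the Green function `g` of the complement (one in each gap), and let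
`PW K = ∑ j, g (cp j)`.  Using `∫ log |z - t| dμ(t) = log cap` for `z ∈ K` and
`∫ log |t - cp j| dμ(t) = g (cp j) + log cap`, one has
`∫ log (w t) dμ(t) = - log π + PW K - log cap`. -/
theorem szego_integral_equilibrium
    (p : ℕ) (hp : 1 ≤ p) (α β : Fin p → ℝ) (hαβ : ∀ j, α j < β j)
    (hdisj : Pairwise (Function.onFun Disjoint fun j => Set.Icc (α j) (β j)))
    (cp : Fin (p - 1) → ℝ)
    (hgap : ∀ j : Fin (p - 1), ∀ i : Fin p, cp j ∉ Set.Icc (α i) (β i))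
    (g : ℝ → ℝ) (cap : ℝ) (hcap : 0 < cap)
    (μ : Measure ℝ) [IsProbabilityMeasure μ]
    (hsupp : μ (⋃ j, Set.Icc (α j) (β j))ᶜ = 0)
    (w : ℝ → ℝ)
    (hw : ∀ t, w t = (1 / Real.pi) * (∏ j, |t - cp j|) /
      Real.sqrt (∏ j, |(t - α j) * (t - β j)|))
    (hdensity : μ = (volume.restrict (⋃ j, Set.Icc (α j) (β j))).withDensity
      fun t => ENNReal.ofReal (w t))
    (hfrost : ∀ z ∈ ⋃ j, Set.Icc (α j) (β j),
      ∫ t, Real.log |z - t| ∂μ = Real.log cap)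
    (hgreen : ∀ j : Fin (p - 1),
      ∫ t, Real.log |t - cp j| ∂μ = g (cp j) + Real.log cap) :
    ∫ t, Real.log (w t) ∂μ =
      -Real.log Real.pi + (∑ j, g (cp j)) - Real.log cap :=
  szego_integral_equilibrium_general p hp α β hαβ hdisj cp g cap μ w hw hdensity hfrost hgreen
end
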